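/- arXiv:2210.11874 — 3 statements merged into one kernel-verified Lean document; each statement's English description precedes it below -/
import Mathlib

section
/- Let K ≥ 3 and let T ∈ ℝ^(K×K) be a matrix such that for every x ∈ ℝ there exists y ∈ ℝ with v(x)ᵀ T = v(y)ᵀ, where v(x) = (1, x, …, x^(K−1)). Then there exist t₀, t₁ ∈ ℝ such that T is the generalized Pascal matrix with parameters (t₀, t₁), i.e., T(i,j) = C(j,i) t₀^(j−i) t₁^i for i ≤ j and T(i,j) = 0 for i > j. -/
open Matrix

def pascalMatrix (K : ℕ) (t₀ t₁ : ℝ) : Matrix (Fin K) (Fin K) ℝ :=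
  fun i j => if (i : ℕ) ≤ (j : ℕ) then
    (Nat.choose (j : ℕ) (i : ℕ) : ℝ) * t₀ ^ ((j : ℕ) - (i : ℕ)) * t₁ ^ (i : ℕ) else 0

def vandVec (K : ℕ) (x : ℝ) : Fin K → ℝ := fun j => x ^ (j : ℕ)

/-!
Read the `j`-th column of `T` as the coefficient vector of a polynomial `q j` of degree `< K`.
Then `(v(x)ᵀ T) j = q j (x)`, so the hypothesis says `q j (x) = y ^ j = (q 1 (x)) ^ j` for every
real `x`, i.e. `q j = (q 1) ^ j` as polynomials. Comparing degrees in `q (K - 1) = (q 1) ^ (K - 1)`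
forces `q 1 = t₁ X + t₀`, and the binomial theorem turns the coefficients of `(t₁ X + t₀) ^ j`
into the generalized Pascal entries.
-/

open Polynomial

theorem Polynomial.coeff_C_mul_X_add_C_pow {R : Type*} [CommRing R] (a b : R) (n k : ℕ) :
    ((C a * X + C b) ^ n).coeff k = b ^ (n - k) * n.choose k * a ^ k := by
  have hcomp : C a * X + C b = (X + C b).comp (C a * X) := by simp
  rw [hcomp, ← pow_comp, comp_C_mul_X_coeff, coeff_X_add_C_pow]

theorem Polynomial.natDegree_le_one_of_natDegree_pow_le {R : Type*} [Semiring R]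
    [NoZeroDivisors R] {p : R[X]} {n : ℕ} (hn : 0 < n) (h : (p ^ n).natDegree ≤ n) :
    p.natDegree ≤ 1 := by
  rw [natDegree_pow] at h
  exact Nat.le_of_mul_le_mul_left (by simpa using h) hn

theorem pascalMatrix_apply_eq_coeff (K : ℕ) (t₀ t₁ : ℝ) (i j : Fin K) :
    pascalMatrix K t₀ t₁ i j = ((C t₁ * X + C t₀) ^ (j : ℕ)).coeff i := by
  rw [coeff_C_mul_X_add_C_pow, pascalMatrix]
  split_ifs with hij
  · ring
  · rw [Nat.choose_eq_zero_of_lt (not_le.mp hij)]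
    simp

theorem eval_ofFn_transpose_eq_vecMul_vandVec {n : Type*} {K : ℕ} (T : Matrix (Fin K) n ℝ)
    (j : n) (x : ℝ) : (ofFn K (Tᵀ j)).eval x = vecMul (vandVec K x) T j := by
  simp only [ofFn_eq_sum_monomial, eval_finsetSum, eval_monomial, vecMul, dotProduct, vandVec,
    transpose_apply]
  exact Finset.sum_congr rfl fun _ _ => mul_comm _ _

theorem ofFn_transpose_eq_pow {K : ℕ} {T : Matrix (Fin K) (Fin K) ℝ}
    (h : ∀ x : ℝ, ∃ y : ℝ, vecMul (vandVec K x) T = vandVec K y) (hK : 1 < K) (j : Fin K) :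
    ofFn K (Tᵀ j) = ofFn K (Tᵀ ⟨1, hK⟩) ^ (j : ℕ) := by
  refine Polynomial.funext fun x => ?_
  obtain ⟨y, hy⟩ := h x
  rw [eval_pow, eval_ofFn_transpose_eq_vecMul_vandVec, eval_ofFn_transpose_eq_vecMul_vandVec, hy]
  simp [vandVec]

theorem stmt_1 (K : ℕ) (hK : 3 ≤ K) (T : Matrix (Fin K) (Fin K) ℝ)
    (h : ∀ x : ℝ, ∃ y : ℝ, Matrix.vecMul (vandVec K x) T = vandVec K y) :
    ∃ t₀ t₁ : ℝ, T = pascalMatrix K t₀ t₁ := by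
  have h1K : 1 < K := by omega
  set p := ofFn K (Tᵀ ⟨1, h1K⟩)
  have hcol : ∀ j, ofFn K (Tᵀ j) = p ^ (j : ℕ) := ofFn_transpose_eq_pow h h1K
  have hp : p.natDegree ≤ 1 := by
    refine natDegree_le_one_of_natDegree_pow_le (n := K - 1) (by omega) ?_
    rw [← hcol ⟨K - 1, by omega⟩]
    exact Nat.le_sub_one_of_lt (ofFn_natDegree_lt (by omega) _)
  refine ⟨p.coeff 0, p.coeff 1, ?_⟩
  ext i j
  rw [pascalMatrix_apply_eq_coeff, ← eq_X_add_C_of_natDegree_le_one hp, ← hcol,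
    ofFn_coeff_eq_val_of_lt _ i.isLt]
  rfl
end

section
/- Suppose Y = V(x) W with V(x) ∈ ℝ^(N×K) the Vandermonde matrix at points x and W ∈ ℝ^(K×L). Then for any t₀ ∈ ℝ and t₁ ≠ 0, the pair (x′, W′) with x′ᵢ = t₀ + t₁xᵢ and W′ = T_(t₀,t₁)^(−1) W also satisfies Y = V(x′) W′. Hence the factorization model Y = V(x)W is not identifiable beyond affine reparametrization of x. -/
open Matrix

def vandMatrix (N K : ℕ) (x : Fin N → ℝ) : Matrix (Fin N) (Fin K) ℝ :=
  fun i j => x i ^ (j : ℕ)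

/-!
By the binomial theorem, `(t₀ + t₁ x)^j = ∑_{k ≤ j} x^k C(j,k) t₀^(j-k) t₁^k`, i.e.
`V(t₀ + t₁ x) = V(x) T_(t₀,t₁)`. The Pascal matrix is upper triangular with diagonal `t₁^i`, hence
invertible for `t₁ ≠ 0`, and `V(x) W = V(x) T (T⁻¹ W) = V(t₀ + t₁ x) (T⁻¹ W)`.
-/

theorem pascalMatrix_isUpperTriangular (K : ℕ) (t₀ t₁ : ℝ) :
    (pascalMatrix K t₀ t₁).IsUpperTriangular := fun _ _ hij =>
  if_neg (Nat.not_le.mpr hij)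

theorem det_pascalMatrix (K : ℕ) (t₀ t₁ : ℝ) :
    (pascalMatrix K t₀ t₁).det = ∏ i : Fin K, t₁ ^ (i : ℕ) := by
  rw [det_of_isUpperTriangular (pascalMatrix_isUpperTriangular K t₀ t₁)]
  simp [pascalMatrix]

theorem isUnit_det_pascalMatrix (K : ℕ) (t₀ : ℝ) {t₁ : ℝ} (ht₁ : t₁ ≠ 0) :
    IsUnit (pascalMatrix K t₀ t₁).det := by
  rw [det_pascalMatrix]
  exact (Finset.prod_ne_zero_iff.mpr fun i _ => pow_ne_zero _ ht₁).isUnit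

theorem vandMatrix_affine_eq_mul_pascalMatrix (N K : ℕ) (x : Fin N → ℝ) (t₀ t₁ : ℝ) :
    vandMatrix N K (fun i => t₀ + t₁ * x i) = vandMatrix N K x * pascalMatrix K t₀ t₁ := by
  ext i j
  have hj : (j : ℕ) + 1 ≤ K := j.isLt
  simp only [vandMatrix, pascalMatrix, mul_apply]
  rw [Fin.sum_univ_eq_sum_range (fun k => x i ^ k * if k ≤ (j : ℕ) then
      ((j : ℕ).choose k : ℝ) * t₀ ^ ((j : ℕ) - k) * t₁ ^ k else 0),
    ← Finset.sum_subset (Finset.range_subset_range.mpr hj), add_comm, add_pow]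
  · refine Finset.sum_congr rfl fun k hk => ?_
    rw [if_pos (Nat.lt_succ_iff.mp (Finset.mem_range.mp hk))]
    ring
  · intro k _ hk
    rw [if_neg (by simpa [Nat.lt_succ_iff] using hk), mul_zero]

/-- Non-identifiability of the factorization `Y = V(x) W` beyond affine
reparametrization of `x`. -/
theorem stmt_8 (N K L : ℕ) (x : Fin N → ℝ) (W : Matrix (Fin K) (Fin L) ℝ)
    (Y : Matrix (Fin N) (Fin L) ℝ) (hY : Y = vandMatrix N K x * W)
    (t₀ t₁ : ℝ) (ht₁ : t₁ ≠ 0) :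
    Y = vandMatrix N K (fun i => t₀ + t₁ * x i) * ((pascalMatrix K t₀ t₁)⁻¹ * W) := by
  rw [vandMatrix_affine_eq_mul_pascalMatrix, Matrix.mul_assoc,
    mul_nonsing_inv_cancel_left _ _ (isUnit_det_pascalMatrix K t₀ ht₁), hY]
end

section
/- Let f(x) = ½‖P V(x)‖_F² where P ∈ ℝ^(N×N) is a symmetric idempotent matrix and V(x) is the N×K Vandermonde matrix at points x ∈ ℝ^N. Then the gradient of f is ∇f(x) = diag(P V(x) D_Kᵀ V(x)ᵀ), where D_K = SupDiag(1, 2, …, K−1) is the K×K polynomial differentiation matrix and diag(·) extracts the diagonal of a matrix as a vector. -/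
open Matrix

/-- Polynomial differentiation matrix `D_K = SupDiag(1, …, K−1)`. -/
def diffMatrix (K : ℕ) : Matrix (Fin K) (Fin K) ℝ :=
  fun i j => if (i : ℕ) + 1 = (j : ℕ) then (j : ℕ) else 0

/-!
Entrywise, `∂ (V y)ₖⱼ / ∂ yₖ = j yₖ ^ (j - 1) = (V D)ₖⱼ`, so the derivative of `f` in the direction
`v` is the Frobenius pairing `⟨P V, P diag(v) V D⟩`. Because `Pᵀ P = P`, this pairing equals
`∑ₖ vₖ (P V (V D)ᵀ)ₖₖ`.
-/

section
variable {N K : ℕ}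

theorem vandMatrix_mul_diffMatrix_apply (x : Fin N → ℝ) (i : Fin N) (j : Fin K) :
    (vandMatrix N K x * diffMatrix K) i j = (j : ℕ) * x i ^ ((j : ℕ) - 1) := by
  simp only [mul_apply, vandMatrix, diffMatrix, mul_ite, mul_zero]
  rcases Nat.eq_zero_or_pos (j : ℕ) with hj | hj
  · simp [hj]
  · rw [Finset.sum_eq_single ⟨(j : ℕ) - 1, by omega⟩]
    · simp [Nat.sub_add_cancel hj, mul_comm]
    · intro a _ ha
      rw [if_neg]
      contrapose! ha
      ext; simp only; omega
    · simp

theorem hasFDerivAt_vandMatrix_apply (x : EuclideanSpace ℝ (Fin N)) (i : Fin N) (j : Fin K) :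
    HasFDerivAt (fun y : EuclideanSpace ℝ (Fin N) => vandMatrix N K y i j)
      ((vandMatrix N K x * diffMatrix K) i j •
        (EuclideanSpace.proj i : EuclideanSpace ℝ (Fin N) →L[ℝ] ℝ)) x := by
  rw [vandMatrix_mul_diffMatrix_apply, ← nsmul_eq_mul]
  exact (EuclideanSpace.proj (𝕜 := ℝ) i).hasFDerivAt.pow (j : ℕ)

theorem hasFDerivAt_mul_vandMatrix_apply {m : Type*} (P : Matrix m (Fin N) ℝ)
    (x : EuclideanSpace ℝ (Fin N)) (i : m) (j : Fin K) :
    HasFDerivAt (fun y : EuclideanSpace ℝ (Fin N) => (P * vandMatrix N K y) i j)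
      (∑ k, (P i k * (vandMatrix N K x * diffMatrix K) k j) •
        (EuclideanSpace.proj k : EuclideanSpace ℝ (Fin N) →L[ℝ] ℝ)) x := by
  simp only [mul_apply, mul_smul]
  exact HasFDerivAt.fun_sum fun k _ => (hasFDerivAt_vandMatrix_apply x k j).const_mul (P i k)

theorem sum_mul_apply_mul_sum_eq_sum_diag {n m : Type*} [Fintype n] [Fintype m]
    {P : Matrix n n ℝ} (hP : Pᵀ * P = P) (A B : Matrix n m ℝ) (v : n → ℝ) :
    ∑ i, ∑ j, (P * A) i j * ∑ k, P i k * B k j * v k = ∑ k, v k * (P * A * Bᵀ) k k := by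
  have hPA : ∀ k j, (P * A) k j = ∑ i, P i k * (P * A) i j := by
    intro k j
    conv_lhs => rw [← hP, Matrix.mul_assoc, mul_apply]
    rfl
  symm
  calc ∑ k, v k * (P * A * Bᵀ) k k
      = ∑ k, ∑ j, ∑ i, (P * A) i j * (P i k * B k j * v k) := by
        refine Finset.sum_congr rfl fun k _ => ?_
        rw [mul_apply, Finset.mul_sum]
        refine Finset.sum_congr rfl fun j _ => ?_
        rw [transpose_apply, hPA k j, Finset.sum_mul, Finset.mul_sum]
        exact Finset.sum_congr rfl fun i _ => by ring
    _ = ∑ i, ∑ j, ∑ k, (P * A) i j * (P i k * B k j * v k) := by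
        rw [Finset.sum_comm, Finset.sum_congr rfl fun _ _ => Finset.sum_comm, Finset.sum_comm]
    _ = _ := by simp only [Finset.mul_sum]

end

/-- The gradient of `f(x) = ½‖P V(x)‖_F²` is `diag(P V(x) D_Kᵀ V(x)ᵀ)`. -/
theorem stmt_15 (N K : ℕ) (P : Matrix (Fin N) (Fin N) ℝ)
    (hPsymm : Pᵀ = P) (hPidem : P * P = P)
    (f : EuclideanSpace ℝ (Fin N) → ℝ)
    (hf : f = fun (x : EuclideanSpace ℝ (Fin N)) => (1 / 2 : ℝ) *
      ∑ i : Fin N, ∑ j : Fin K, (P * vandMatrix N K x) i j ^ 2)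
    (x : EuclideanSpace ℝ (Fin N)) :
    HasGradientAt f
      ((WithLp.toLp 2 (fun i => (P * vandMatrix N K x * (diffMatrix K)ᵀ * (vandMatrix N K x)ᵀ) i i) :
        EuclideanSpace ℝ (Fin N))) x := by
  rw [hasGradientAt_iff_hasFDerivAt, hf]
  have hderiv := (HasFDerivAt.fun_sum (u := Finset.univ) fun i _ =>
    HasFDerivAt.fun_sum (u := Finset.univ) fun j _ =>
      (hasFDerivAt_mul_vandMatrix_apply (K := K) P x i j).pow 2).const_mul (1 / 2 : ℝ)
  refine hderiv.congr_fderiv ?_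
  ext v
  simp only [one_div, Nat.add_one_sub_one, pow_one, nsmul_eq_mul, Nat.cast_ofNat, _root_.smul_apply,
    _root_.sum_apply, PiLp.proj_apply, smul_eq_mul, InnerProductSpace.toDual_apply_apply,
    PiLp.inner_apply, RCLike.inner_apply, conj_trivial]
  rw [Matrix.mul_assoc _ (diffMatrix K)ᵀ, ← transpose_mul,
    ← sum_mul_apply_mul_sum_eq_sum_diag (by rw [hPsymm, hPidem])]
  simp only [Finset.mul_sum, ← mul_assoc, inv_mul_cancel₀ (two_ne_zero' ℝ), one_mul]
end
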